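/- Let P be a finite poset with realizer {Λ₁, Λ₂}, Q the complementary poset, w the chain-counting weight, and v the associated valuation on the downset lattice L. For any downset A with v(A) = i < |L| - 1, let B be the complementary upset, which is a chain in Q; let y be its ≤'-minimum. Then the set A' = (A ∪ {y}) \ {x : x <' y} is a downset of P and v(A') = i + 1. -/

import Mathlib

open Finset

variable (P : Type*) [PartialOrder P] [Fintype P] [DecidableEq P]

/-- The lattice of downsets (lower sets) of a finite poset `P`. -/
def DownSet : Type _ := {A : Finset P // IsLowerSet (↑A : Set P)}

variable {P}

instance : Lattice (DownSet P) :=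
  Subtype.lattice (fun _ _ hA hB => by simpa [Finset.sup_eq_union] using hA.union hB)
    (fun _ _ hA hB => by simpa [Finset.inf_eq_inter] using hA.inter hB)

instance : OrderBot (DownSet P) :=
  Subtype.orderBot (by simp [Finset.bot_eq_empty, isLowerSet_empty])

noncomputable instance : Fintype (DownSet P) :=
  Fintype.ofInjective Subtype.val Subtype.val_injective

/-- The valuation associated to a weight function `w`. -/
def vval (w : P → ℕ) (A : DownSet P) : ℕ := ∑ x ∈ A.1, w x

variable [DecidableRel ((· ≤ ·) : P → P → Prop)]

/-- The principal downset of `y`. -/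
def pd (y : P) : DownSet P :=
  ⟨univ.filter (· ≤ y), by
    intro a b hba ha
    simp only [coe_filter, Set.mem_setOf_eq, mem_univ, true_and] at *
    exact hba.trans ha⟩

/-- The dual valuation evaluated on the principal upset of `x`. -/
def vup (w : P → ℕ) (x : P) : ℕ := ∑ z ∈ univ.filter (fun z => x ≤ z), w z

/-- `T` is an initial segment for the valuation `v`. -/
def Initial (v : DownSet P → ℕ) (T : Set (DownSet P)) : Prop :=
  ∃ j, v '' T = {k | k < j}

/-- `T` is a final segment for the valuation `v`. -/
def Final (v : DownSet P → ℕ) (T : Set (DownSet P)) : Prop :=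
  ∃ j, v '' T = {k | j ≤ k ∧ k < Fintype.card (DownSet P)}

/-- The set of arbitrary (nonempty) joins of elements of `T`. -/
def joinSet (T : Set (DownSet P)) : Set (DownSet P) :=
  {a | ∃ S : Finset (DownSet P), ↑S ⊆ T ∧ ∃ hS : S.Nonempty, a = S.sup' hS id}

/-- The set of arbitrary (nonempty) meets of elements of `T`. -/
def meetSet (T : Set (DownSet P)) : Set (DownSet P) :=
  {a | ∃ S : Finset (DownSet P), ↑S ⊆ T ∧ ∃ hS : S.Nonempty, a = S.inf' hS id}

/-- A complete valuation: bijective onto `{0,…,|L|-1}`, join-closures of initial segments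
are initial segments, meet-closures of final segments are final segments. -/
def IsCompleteValuation (w : P → ℕ) : Prop :=
  Set.BijOn (vval w) Set.univ {k | k < Fintype.card (DownSet P)} ∧
  (∀ T, Initial (vval w) T → Initial (vval w) (joinSet T)) ∧
  (∀ T, Final (vval w) T → Final (vval w) (meetSet T))

/-- The complementary order from two linear orders: `x ≤' y` iff `le1 x y` and `le2 y x`. -/
def le'' (le1 le2 : P → P → Prop) (x y : P) : Prop := le1 x y ∧ le2 y x


instance {le1 le2 : P → P → Prop} [DecidableRel le1] [DecidableRel le2] :
    DecidableRel (le'' le1 le2) := fun x y =>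
  inferInstanceAs (Decidable (le1 x y ∧ le2 y x))

/-- The number of chains (under the complementary order) with maximum element `y`. -/
noncomputable def chainCount (le1 le2 : P → P → Prop) (y : P) : ℕ :=
  Set.ncard {C : Finset P | y ∈ C ∧ (∀ a ∈ C, le'' le1 le2 a y) ∧
    ∀ a ∈ C, ∀ b ∈ C, le'' le1 le2 a b ∨ le'' le1 le2 b a}

/-- `{le1, le2}` is a realizer of `P`. -/
def IsRealizer (le1 le2 : P → P → Prop) : Prop :=
  IsLinearOrder P le1 ∧ IsLinearOrder P le2 ∧ ∀ x y : P, x ≤ y ↔ le1 x y ∧ le2 x y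

/-!
Removing its top `y` from a `≤'`-chain leaves either the empty chain or a chain whose top is
some `x <' y`, so the chain count satisfies `w y = 1 + ∑_{x <' y} w x`. As `y` is `≤'`-least
outside `A`, every `x <' y` already lies in `A`; passing from `A` to `A'` therefore adds `w y`
and removes exactly that sum. `A'` stays a downset because `Λ₁` and `Λ₂` are linear
extensions of `P`: an element below `y` outside `A` would be `Λ₁`-above and below `y`, and
an element `v <' y` below some `u ∈ A'` forces `y ≤ u` by totality of `Λ₁`.
-/

theorem exists_top_of_chain {α : Type*} {r : α → α → Prop} [Std.Refl r] [IsTrans α r]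
    {C : Finset α} (hC : C.Nonempty) (hchain : ∀ a ∈ C, ∀ b ∈ C, r a b ∨ r b a) :
    ∃ m ∈ C, ∀ a ∈ C, r a m := by
  induction hC using Finset.Nonempty.cons_induction with
  | singleton a => exact ⟨a, mem_singleton_self a, by simp [refl_of r]⟩
  | cons a C _ _ ih =>
    obtain ⟨m, hm, hmax⟩ :=
      ih fun x hx z hz => hchain x (mem_cons_of_mem hx) z (mem_cons_of_mem hz)
    rcases hchain a (mem_cons_self a C) m (mem_cons_of_mem hm) with ham | hma
    · exact ⟨m, mem_cons_of_mem hm, by simpa [ham] using hmax⟩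
    · exact ⟨a, mem_cons_self a C, by
        simpa [refl_of r] using fun x hx => trans_of r (hmax x hx) hma⟩

section Chains

variable {α : Type*} [Fintype α] [DecidableEq α] (r : α → α → Prop) [DecidableRel r]

def chainsWithin (D : Finset α) : Finset (Finset α) :=
  D.powerset.filter fun C => ∀ a ∈ C, ∀ b ∈ C, r a b ∨ r b a

def chainsWithTop (y : α) : Finset (Finset α) :=
  univ.filter fun C =>
    y ∈ C ∧ (∀ a ∈ C, r a y) ∧ ∀ a ∈ C, ∀ b ∈ C, r a b ∨ r b a

def strictBelow (y : α) : Finset α :=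
  univ.filter fun x => r x y ∧ x ≠ y

variable {r}

@[simp]
theorem mem_strictBelow {x y : α} : x ∈ strictBelow r y ↔ r x y ∧ x ≠ y := by
  simp [strictBelow]

@[simp]
theorem mem_chainsWithin {C D : Finset α} :
    C ∈ chainsWithin r D ↔ C ⊆ D ∧ ∀ a ∈ C, ∀ b ∈ C, r a b ∨ r b a := by
  simp [chainsWithin]

@[simp]
theorem mem_chainsWithTop {C : Finset α} {y : α} :
    C ∈ chainsWithTop r y ↔
      y ∈ C ∧ (∀ a ∈ C, r a y) ∧ ∀ a ∈ C, ∀ b ∈ C, r a b ∨ r b a := by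
  simp [chainsWithTop]

theorem card_chainsWithTop_eq_card_chainsWithin [Std.Refl r] (y : α) :
    (chainsWithTop r y).card = (chainsWithin r (strictBelow r y)).card := by
  have hy : y ∉ strictBelow r y := by simp
  refine card_nbij' (·.erase y) (insert y) ?_ ?_ ?_ ?_
  · intro C hC
    obtain ⟨-, hbelow, hchain⟩ := mem_chainsWithTop.1 hC
    simp only [mem_coe, mem_chainsWithin, subset_iff, mem_strictBelow]
    exact ⟨fun a ha => ⟨hbelow a (mem_of_mem_erase ha), ne_of_mem_erase ha⟩,
      fun a ha b hb => hchain a (mem_of_mem_erase ha) b (mem_of_mem_erase hb)⟩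
  · intro C hC
    obtain ⟨hsub, hchain⟩ := mem_chainsWithin.1 hC
    have hbelow : ∀ a ∈ C, r a y := fun a ha => (mem_strictBelow.1 (hsub ha)).1
    refine mem_chainsWithTop.2 ⟨mem_insert_self y C, ?_, ?_⟩ <;>
      simp only [mem_insert, forall_eq_or_imp]
    · exact ⟨refl_of r y, hbelow⟩
    · exact ⟨⟨Or.inl (refl_of r y), fun b hb => Or.inr (hbelow b hb)⟩,
        fun a ha => ⟨Or.inl (hbelow a ha), hchain a ha⟩⟩
  · intro C hC
    exact insert_erase (mem_chainsWithTop.1 hC).1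
  · intro C hC
    exact erase_insert fun hyC => hy ((mem_chainsWithin.1 hC).1 hyC)

theorem chainsWithin_strictBelow [IsPartialOrder α r] (y : α) :
    chainsWithin r (strictBelow r y) =
      insert ∅ ((strictBelow r y).biUnion (chainsWithTop r)) := by
  ext C
  simp only [mem_chainsWithin, mem_chainsWithTop, mem_insert, mem_biUnion, mem_strictBelow]
  constructor
  · rintro ⟨hsub, hchain⟩
    rcases C.eq_empty_or_nonempty with rfl | hne
    · exact Or.inl rfl
    · obtain ⟨m, hm, hmax⟩ := exists_top_of_chain hne hchain
      exact Or.inr ⟨m, mem_strictBelow.1 (hsub hm), hm, hmax, hchain⟩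
  · rintro (rfl | ⟨x, ⟨hxy, hxny⟩, -, hbelow, hchain⟩)
    · simp
    · refine ⟨fun a ha => mem_strictBelow.2 ⟨trans_of r (hbelow a ha) hxy, ?_⟩, hchain⟩
      rintro rfl
      exact hxny (antisymm_of r hxy (hbelow a ha))

theorem pairwiseDisjoint_chainsWithTop [Std.Antisymm r] (s : Set α) :
    s.PairwiseDisjoint (chainsWithTop r) := by
  intro x _ x' _ hne
  refine disjoint_left.2 fun C hC hC' => hne ?_
  rw [mem_chainsWithTop] at hC hC'
  exact antisymm_of r (hC'.2.1 x hC.1) (hC.2.1 x' hC'.1)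

theorem card_chainsWithTop [IsPartialOrder α r] (y : α) :
    (chainsWithTop r y).card = 1 + ∑ x ∈ strictBelow r y, (chainsWithTop r x).card := by
  rw [card_chainsWithTop_eq_card_chainsWithin, chainsWithin_strictBelow,
    card_insert_of_notMem (by simp), card_biUnion (pairwiseDisjoint_chainsWithTop _), add_comm]

theorem strictBelow_subset_of_forall_notMem [Std.Antisymm r] {A : Finset α} {y : α}
    (hmin : ∀ z ∉ A, r y z) : strictBelow r y ⊆ A := by
  intro x hx
  obtain ⟨hxy, hxny⟩ := mem_strictBelow.1 hx
  by_contra hxA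
  exact hxny (antisymm_of r hxy (hmin x hxA))

end Chains

theorem sum_insert_sdiff_of_eq_one_add {α : Type*} [DecidableEq α] {w : α → ℕ}
    {A D : Finset α} {y : α} (hDA : D ⊆ A) (hy : y ∉ A) (hw : w y = 1 + ∑ x ∈ D, w x) :
    ∑ x ∈ insert y A \ D, w x = ∑ x ∈ A, w x + 1 := by
  rw [insert_sdiff_of_notMem A fun hyD => hy (hDA hyD),
    sum_insert fun hyAD => hy (mem_sdiff.1 hyAD).1, hw, ← sum_sdiff hDA]
  ring

section Complementary

variable {α : Type*} {le1 le2 : α → α → Prop}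

instance [IsPartialOrder α le1] [IsPreorder α le2] : IsPartialOrder α (le'' le1 le2) where
  refl a := ⟨refl_of le1 a, refl_of le2 a⟩
  trans _ _ _ hab hbc := ⟨trans_of le1 hab.1 hbc.1, trans_of le2 hbc.2 hab.2⟩
  antisymm _ _ hab hba := antisymm_of le1 hab.1 hba.1

variable [Fintype α] [DecidableEq α] [DecidableRel le1] [DecidableRel le2]

theorem chainCount_eq_card_chainsWithTop (y : α) :
    chainCount le1 le2 y = (chainsWithTop (le'' le1 le2) y).card := by
  rw [chainCount, ← Set.ncard_coe_finset]
  congr 1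
  ext C
  simp [chainsWithTop]

theorem chainCount_eq_one_add_sum [IsPartialOrder α le1] [IsPreorder α le2] (y : α) :
    chainCount le1 le2 y = 1 + ∑ x ∈ strictBelow (le'' le1 le2) y, chainCount le1 le2 x := by
  simp only [chainCount_eq_card_chainsWithTop]
  exact card_chainsWithTop y

theorem isLowerSet_insert_sdiff_strictBelow [PartialOrder α] (h : IsRealizer le1 le2)
    {A : Finset α} (hA : IsLowerSet (A : Set α)) {y : α} (hy : y ∉ A)
    (hmin : ∀ z ∉ A, le'' le1 le2 y z) :
    IsLowerSet (↑(insert y A \ strictBelow (le'' le1 le2) y) : Set α) := by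
  obtain ⟨_, _, hle⟩ := h
  intro u v hvu hu
  simp only [mem_coe, mem_sdiff, mem_insert, mem_strictBelow, le''] at hu ⊢
  obtain ⟨hvu1, hvu2⟩ := (hle v u).1 hvu
  obtain ⟨rfl | huA, hu_notBelow⟩ := hu
  · rcases eq_or_ne v u with rfl | hne
    · exact ⟨Or.inl rfl, hu_notBelow⟩
    have hvA : v ∈ A := by
      by_contra hvA
      exact hne (antisymm_of le1 hvu1 (hmin v hvA).1)
    exact ⟨Or.inr hvA, fun hv => hne (antisymm_of le2 hvu2 hv.1.2)⟩
  · refine ⟨Or.inr (hA hvu huA), fun ⟨⟨_, hyv2⟩, _⟩ => hy ?_⟩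
    have hyu2 : le2 y u := trans_of le2 hyv2 hvu2
    have hyu1 : le1 y u := (total_of le1 u y).resolve_left fun huy1 =>
      hu_notBelow ⟨⟨huy1, hyu2⟩, by rintro rfl; exact hy huA⟩
    exact hA ((hle y u).2 ⟨hyu1, hyu2⟩) huA

end Complementary

theorem stmt15_general (le1 le2 : P → P → Prop) [DecidableRel le1] [DecidableRel le2]
    (h : IsRealizer le1 le2) (A : DownSet P)
    (y : P) (hy : y ∉ A.1) (hmin : ∀ z, z ∉ A.1 → le'' le1 le2 y z) :
    IsLowerSet
      (↑((insert y A.1) \ univ.filter (fun x => le'' le1 le2 x y ∧ x ≠ y)) : Set P) ∧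
    ∑ x ∈ (insert y A.1) \ univ.filter (fun x => le'' le1 le2 x y ∧ x ≠ y),
        chainCount le1 le2 x = vval (chainCount le1 le2) A + 1 := by
  have : IsLinearOrder P le1 := h.1
  have : IsLinearOrder P le2 := h.2.1
  exact ⟨isLowerSet_insert_sdiff_strictBelow h A.2 hy hmin,
    sum_insert_sdiff_of_eq_one_add (strictBelow_subset_of_forall_notMem hmin) hy
      (chainCount_eq_one_add_sum y)⟩

/-- Inductive step: if `A` is a downset with `v(A) < |L| - 1` and `y` is the
`≤'`-minimum of the complementary upset, then `A' = (A ∪ {y}) \ {x : x <' y}` is a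
downset with `v(A') = v(A) + 1`. -/
theorem stmt15 (le1 le2 : P → P → Prop) [DecidableRel le1] [DecidableRel le2]
    (h : IsRealizer le1 le2) (A : DownSet P)
    (hA : vval (chainCount le1 le2) A < Fintype.card (DownSet P) - 1)
    (y : P) (hy : y ∉ A.1) (hmin : ∀ z, z ∉ A.1 → le'' le1 le2 y z) :
    IsLowerSet
      (↑((insert y A.1) \ univ.filter (fun x => le'' le1 le2 x y ∧ x ≠ y)) : Set P) ∧
    ∑ x ∈ (insert y A.1) \ univ.filter (fun x => le'' le1 le2 x y ∧ x ≠ y),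
        chainCount le1 le2 x = vval (chainCount le1 le2) A + 1 :=
  stmt15_general le1 le2 h A y hy hmin
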